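/- Every 3-colourable finite simple graph is semi-transitive; that is, every graph admitting a proper coloring with 3 colors admits a semi-transitive orientation. -/

import Mathlib

/-
Orient every edge from the smaller to the larger colour of a proper colouring with colours
`0 < 1 < 2`. Colours strictly increase along directed paths, so the orientation is acyclic and
every directed path has at most two arcs. A path `a → b → c` whose ends are adjacent closes a
triangle, and acyclicity forces the arc `a → c`; so the orientation is semi-transitive.
-/

/-- `D` is an orientation of the simple graph `G`: every edge gets exactly one direction. -/
def SimpleGraph.IsOrientation {V : Type*} (G : SimpleGraph V) (D : V → V → Prop) : Prop :=
  (∀ u v, G.Adj u v ↔ D u v ∨ D v u) ∧ ∀ u v, D u v → ¬ D v u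

/-- A digraph (given as a relation) is acyclic: no directed cycle. -/
def DigraphAcyclic {V : Type*} (D : V → V → Prop) : Prop :=
  ∀ v, ¬ Relation.TransGen D v v

/-- `D` is a semi-transitive orientation of `G`: it is an acyclic orientation such that for every
directed path `p 0 → p 1 → ⋯ → p k`, either `p 0` and `p k` are non-adjacent in `G`, or
`p i → p j` is an arc for all `i < j`. -/
def SimpleGraph.IsSemitransitiveOrientation {V : Type*} (G : SimpleGraph V)
    (D : V → V → Prop) : Prop :=
  G.IsOrientation D ∧ DigraphAcyclic D ∧
    ∀ (k : ℕ) (p : Fin (k + 1) → V),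
      (∀ i : Fin k, D (p i.castSucc) (p i.succ)) →
      (¬ G.Adj (p 0) (p (Fin.last k)) ∨ ∀ i j : Fin (k + 1), i < j → D (p i) (p j))

/-- A graph is semi-transitive if it admits a semi-transitive orientation. -/
def SimpleGraph.Semitransitive {V : Type*} (G : SimpleGraph V) : Prop :=
  ∃ D : V → V → Prop, G.IsSemitransitiveOrientation D

theorem Relation.reflTransGen_of_fin_path {V : Type*} {D : V → V → Prop} :
    ∀ {k : ℕ} (p : Fin (k + 1) → V), (∀ i : Fin k, D (p i.castSucc) (p i.succ)) →
      Relation.ReflTransGen D (p 0) (p (Fin.last k))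
  | 0, _, _ => .refl
  | k + 1, p, hp =>
    (reflTransGen_of_fin_path (Fin.init p) fun i => hp i.castSucc).tail (hp (Fin.last k))

theorem SimpleGraph.IsOrientation.isSemitransitiveOrientation_of_forall_path_le_two
    {V : Type*} {G : SimpleGraph V} {D : V → V → Prop} (hD : G.IsOrientation D)
    (hacyc : DigraphAcyclic D)
    (hshort : ∀ (k : ℕ) (p : Fin (k + 1) → V),
      (∀ i : Fin k, D (p i.castSucc) (p i.succ)) → k ≤ 2) :
    G.IsSemitransitiveOrientation D := by
  refine ⟨hD, hacyc, fun k p hp => or_iff_not_imp_left.2 fun hadj i j hij => ?_⟩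
  have hk := hshort k p hp
  -- with at most two arcs, `i < j` are either consecutive or the two endpoints
  obtain hsucc | ⟨rfl, rfl⟩ : j.val = i.val + 1 ∨ (i = 0 ∧ j = Fin.last k) := by
    simp only [Fin.ext_iff, Fin.val_zero, Fin.val_last]; omega
  · have hi : i.val < k := by omega
    have hj : j = (⟨i, hi⟩ : Fin k).succ := Fin.ext hsucc
    exact hj ▸ hp ⟨i, hi⟩
  · refine (hD.1 _ _ |>.1 (not_not.1 hadj)).resolve_right fun hback => hacyc (p (Fin.last k)) ?_
    exact Relation.TransGen.head' hback (Relation.reflTransGen_of_fin_path p hp)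

namespace SimpleGraph.Coloring

variable {V α : Type*} {G : SimpleGraph V}

def orientation [LT α] (c : G.Coloring α) (u v : V) : Prop :=
  G.Adj u v ∧ c u < c v

theorem isOrientation_orientation [LinearOrder α] (c : G.Coloring α) :
    G.IsOrientation c.orientation := by
  refine ⟨fun u v => ⟨fun hadj => ?_, ?_⟩, fun _ _ huv hvu => huv.2.not_gt hvu.2⟩
  · exact (c.valid hadj).lt_or_gt.imp (⟨hadj, ·⟩) (⟨hadj.symm, ·⟩)
  · rintro (⟨hadj, -⟩ | ⟨hadj, -⟩)
    exacts [hadj, hadj.symm]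

theorem lt_of_transGen_orientation [Preorder α] (c : G.Coloring α) {u v : V}
    (huv : Relation.TransGen c.orientation u v) : c u < c v := by
  induction huv with
  | single h => exact h.2
  | tail _ h ih => exact ih.trans h.2

theorem digraphAcyclic_orientation [Preorder α] (c : G.Coloring α) :
    DigraphAcyclic c.orientation :=
  fun _ hv => (c.lt_of_transGen_orientation hv).false

theorem card_le_of_orientation_path [Preorder α] [Fintype α] (c : G.Coloring α) {k : ℕ}
    (p : Fin (k + 1) → V) (hp : ∀ i : Fin k, c.orientation (p i.castSucc) (p i.succ)) :
    k + 1 ≤ Fintype.card α := by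
  have hmono : StrictMono (c ∘ p) := Fin.strictMono_iff_lt_succ.2 fun i => (hp i).2
  simpa using Fintype.card_le_of_injective _ hmono.injective

end SimpleGraph.Coloring

theorem colorable_three_semitransitive_general (V : Type) (G : SimpleGraph V)
    (h : G.Colorable 3) : G.Semitransitive := by
  obtain ⟨c⟩ := h
  refine ⟨c.orientation,
    c.isOrientation_orientation.isSemitransitiveOrientation_of_forall_path_le_two
      c.digraphAcyclic_orientation fun k p hp => ?_⟩
  have hcard : k + 1 ≤ Fintype.card (Fin 3) := c.card_le_of_orientation_path p hp
  simp only [Fintype.card_fin] at hcard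
  omega

/-- Every 3-colourable finite graph is semi-transitive. -/
theorem colorable_three_semitransitive (V : Type) [Fintype V] (G : SimpleGraph V)
    (h : G.Colorable 3) : G.Semitransitive :=
  colorable_three_semitransitive_general V G h
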